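/- The area of the horizontal sphere Σ₀ in the Berger sphere (S³, g_ρ) is 2π ∫₀^π √(sin²(s) + (ρ² - 1) sin⁴(s)) ds; in particular, for ρ = 1 it equals 4π. -/

import Mathlib

/-!
The tangent vector `∂ₛ` is horizontal (orthogonal to the Hopf field `ξ`), so the Gram determinant
of `g_ρ` on `(∂ₛ, ∂_θ)` is `|∂ₛ|² (|∂_θ|² + (ρ² - 1) ⟨∂_θ, ξ⟩²) - ⟨∂ₛ, ∂_θ⟩²`. The rotation
factor `e^{iθ}` cancels from every Euclidean inner product, which leaves `sin² s + (ρ² - 1) sin⁴ s`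
for every `θ`; the `θ`-integral is then a constant times `2π`. For `ρ = 1` the integrand is
`sin s ≥ 0` on `[0, π]`.
-/

open Real

/-- The Euclidean (real) inner product on `ℂ² ≅ ℝ⁴`. -/
def rinner (a b : ℂ × ℂ) : ℝ :=
  (a.1 * (starRingEnd ℂ) b.1).re + (a.2 * (starRingEnd ℂ) b.2).re

/-- The Hopf vector field `ξ(z,w) = (iz, iw)`. -/
def hopfField (p : ℂ × ℂ) : ℂ × ℂ := (Complex.I * p.1, Complex.I * p.2)

/-- The Berger metric `g_ρ(X,Y) = ⟨X,Y⟩ + (ρ²-1)⟨X,ξ⟩⟨Y,ξ⟩` at the point `p`. -/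
def bergerMetric (ρ : ℝ) (p X Y : ℂ × ℂ) : ℝ :=
  rinner X Y + (ρ ^ 2 - 1) * rinner X (hopfField p) * rinner Y (hopfField p)

/-- Polar parametrization of the horizontal sphere `Σ₀ = {(z,w) ∈ S³ : w = w̄}` about the
pole `(0,0,1,0)`. -/
noncomputable def horizSphere (s θ : ℝ) : ℂ × ℂ :=
  ((Real.sin s : ℂ) * Complex.exp (θ * Complex.I), (Real.cos s : ℂ))

/-- The partial derivative of the parametrization in the `s` direction. -/
noncomputable def horizSphereDs (s θ : ℝ) : ℂ × ℂ :=
  ((Real.cos s : ℂ) * Complex.exp (θ * Complex.I), (-Real.sin s : ℂ))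

/-- The partial derivative of the parametrization in the `θ` direction. -/
noncomputable def horizSphereDθ (s θ : ℝ) : ℂ × ℂ :=
  (Complex.I * (Real.sin s : ℂ) * Complex.exp (θ * Complex.I), 0)

lemma rinner_mul_right_of_norm_eq_one {e : ℂ} (he : ‖e‖ = 1) (x y u v : ℂ) :
    rinner (x * e, u) (y * e, v) = rinner (x, u) (y, v) := by
  have : x * e * (starRingEnd ℂ) (y * e) = x * (starRingEnd ℂ) y := by
    rw [map_mul, mul_mul_mul_comm, Complex.mul_conj, Complex.normSq_eq_norm_sq, he]
    simp
  simp only [rinner, this]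

lemma rinner_ofReal (a b c d : ℝ) : rinner (a, b) (c, d) = a * c + b * d := by
  simp [rinner, ← Complex.ofReal_mul]

lemma bergerMetric_gram_of_rinner_hopfField_eq_zero (ρ : ℝ) {p X : ℂ × ℂ} (Y : ℂ × ℂ)
    (hX : rinner X (hopfField p) = 0) :
    bergerMetric ρ p X X * bergerMetric ρ p Y Y - bergerMetric ρ p X Y ^ 2 =
      rinner X X * (rinner Y Y + (ρ ^ 2 - 1) * rinner Y (hopfField p) ^ 2) - rinner X Y ^ 2 := by
  simp only [bergerMetric, hX]
  ring

lemma hopfField_horizSphere (s θ : ℝ) :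
    hopfField (horizSphere s θ) =
      (Complex.I * Real.sin s * Complex.exp (θ * Complex.I), Complex.I * Real.cos s) := by
  simp only [hopfField, horizSphere, mul_assoc]

lemma rinner_horizSphereDs_self (s θ : ℝ) :
    rinner (horizSphereDs s θ) (horizSphereDs s θ) = 1 := by
  rw [horizSphereDs, rinner_mul_right_of_norm_eq_one (Complex.norm_exp_ofReal_mul_I θ),
    ← Complex.ofReal_neg, rinner_ofReal]
  linear_combination sin_sq_add_cos_sq s

lemma rinner_horizSphereDθ_self (s θ : ℝ) :
    rinner (horizSphereDθ s θ) (horizSphereDθ s θ) = Real.sin s ^ 2 := by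
  rw [horizSphereDθ, rinner_mul_right_of_norm_eq_one (Complex.norm_exp_ofReal_mul_I θ)]
  simp [rinner, sq, Complex.sin_ofReal_re]

lemma rinner_horizSphereDs_horizSphereDθ (s θ : ℝ) :
    rinner (horizSphereDs s θ) (horizSphereDθ s θ) = 0 := by
  rw [horizSphereDs, horizSphereDθ,
    rinner_mul_right_of_norm_eq_one (Complex.norm_exp_ofReal_mul_I θ)]
  simp [rinner]

lemma rinner_horizSphereDs_hopfField (s θ : ℝ) :
    rinner (horizSphereDs s θ) (hopfField (horizSphere s θ)) = 0 := by
  rw [horizSphereDs, hopfField_horizSphere,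
    rinner_mul_right_of_norm_eq_one (Complex.norm_exp_ofReal_mul_I θ)]
  simp [rinner]

lemma rinner_horizSphereDθ_hopfField (s θ : ℝ) :
    rinner (horizSphereDθ s θ) (hopfField (horizSphere s θ)) = Real.sin s ^ 2 := by
  rw [horizSphereDθ, hopfField_horizSphere,
    rinner_mul_right_of_norm_eq_one (Complex.norm_exp_ofReal_mul_I θ)]
  simp [rinner, sq, Complex.sin_ofReal_re]

lemma hasDerivAt_horizSphere_s (s θ : ℝ) :
    HasDerivAt (fun t => horizSphere t θ) (horizSphereDs s θ) s := by
  have hcos : HasDerivAt (fun t : ℝ => (Real.cos t : ℂ)) (-Real.sin s : ℂ) s := by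
    exact_mod_cast (Real.hasDerivAt_cos s).ofReal_comp
  exact ((Real.hasDerivAt_sin s).ofReal_comp.mul_const _).prodMk hcos

lemma hasDerivAt_horizSphere_θ (s θ : ℝ) :
    HasDerivAt (fun t => horizSphere s t) (horizSphereDθ s θ) θ := by
  have hexp : HasDerivAt (fun t : ℝ => Complex.exp (t * Complex.I))
      (Complex.exp (θ * Complex.I) * Complex.I) θ := by
    simpa using ((hasDerivAt_id θ).ofReal_comp.mul_const Complex.I).cexp
  refine ((hexp.const_mul (Real.sin s : ℂ)).prodMk
    (hasDerivAt_const θ (Real.cos s : ℂ))).congr_deriv ?_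
  simp only [horizSphereDθ, Prod.mk.injEq, and_true]
  ring

lemma horizSphere_area_element (ρ s θ : ℝ) :
    bergerMetric ρ (horizSphere s θ) (horizSphereDs s θ) (horizSphereDs s θ) *
        bergerMetric ρ (horizSphere s θ) (horizSphereDθ s θ) (horizSphereDθ s θ) -
      bergerMetric ρ (horizSphere s θ) (horizSphereDs s θ) (horizSphereDθ s θ) ^ 2 =
      Real.sin s ^ 2 + (ρ ^ 2 - 1) * Real.sin s ^ 4 := by
  rw [bergerMetric_gram_of_rinner_hopfField_eq_zero ρ _ (rinner_horizSphereDs_hopfField s θ),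
    rinner_horizSphereDs_self, rinner_horizSphereDθ_self, rinner_horizSphereDs_horizSphereDθ,
    rinner_horizSphereDθ_hopfField]
  ring

lemma integral_sqrt_sin_sq_zero_pi : ∫ s in (0 : ℝ)..π, √(Real.sin s ^ 2) = 2 := by
  have hsin : ∀ s ∈ Set.uIcc 0 π, √(Real.sin s ^ 2) = Real.sin s := fun s hs =>
    Real.sqrt_sq (Real.sin_nonneg_of_mem_Icc (Set.uIcc_of_le pi_nonneg ▸ hs))
  rw [intervalIntegral.integral_congr hsin, integral_sin, cos_zero, cos_pi]
  norm_num

/-- The area of the horizontal sphere `Σ₀` in the Berger sphere `(S³, g_ρ)`, computed via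
the polar parametrization, equals `2π ∫₀^π √(sin²s + (ρ²-1) sin⁴s) ds`; in particular for
`ρ = 1` it equals `4π`. -/
theorem berger_area_horizontal_sphere (ρ : ℝ) :
    (∀ s θ : ℝ, HasDerivAt (fun t => horizSphere t θ) (horizSphereDs s θ) s ∧
      HasDerivAt (fun t => horizSphere s t) (horizSphereDθ s θ) θ) ∧
    (∫ θ in (0 : ℝ)..(2 * π), ∫ s in (0 : ℝ)..π,
        Real.sqrt
          (bergerMetric ρ (horizSphere s θ) (horizSphereDs s θ) (horizSphereDs s θ) *
              bergerMetric ρ (horizSphere s θ) (horizSphereDθ s θ) (horizSphereDθ s θ) -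
            bergerMetric ρ (horizSphere s θ) (horizSphereDs s θ) (horizSphereDθ s θ) ^ 2)) =
      2 * π * ∫ s in (0 : ℝ)..π,
        Real.sqrt (Real.sin s ^ 2 + (ρ ^ 2 - 1) * Real.sin s ^ 4) ∧
    (ρ = 1 →
      (2 * π * ∫ s in (0 : ℝ)..π,
        Real.sqrt (Real.sin s ^ 2 + (ρ ^ 2 - 1) * Real.sin s ^ 4)) = 4 * π) := by
  refine ⟨fun s θ => ⟨hasDerivAt_horizSphere_s s θ, hasDerivAt_horizSphere_θ s θ⟩, ?_, ?_⟩
  · simp only [horizSphere_area_element, intervalIntegral.integral_const, sub_zero, smul_eq_mul]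
  · rintro rfl
    simp only [one_pow, sub_self, zero_mul, add_zero, integral_sqrt_sin_sq_zero_pi]
    ring
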